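/- arXiv:2001.08475 — 5 statements merged into one kernel-verified Lean document; each statement's English description precedes it below -/
import Mathlib

section
/- If f : ℝ → [0,∞) is log-convex on an interval I ⊆ ℝ and f is not constant on any nondegenerate subinterval of I, then f is strictly convex on I, i.e. f((1−θ)r+θt) < (1−θ)f(r)+θf(t) for all r ≠ t in I and θ ∈ (0,1). -/
open Set

/-! A log-convex function lies below the weighted geometric mean of its endpoint values, which by
weighted AM-GM lies below their arithmetic mean, strictly unless the two endpoint values agree.
In that remaining case equality at an interior point would be an interior maximum of the convex
function `f` on the segment, forcing `f` to be constant there. -/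

theorem ConvexOn.eq_of_mem_Icc_of_le_of_le {𝕜 β : Type*} [Field 𝕜] [LinearOrder 𝕜]
    [IsStrictOrderedRing 𝕜] [AddCommMonoid β] [LinearOrder β] [IsOrderedCancelAddMonoid β]
    [Module 𝕜 β] [PosSMulStrictMono 𝕜 β] {s : Set 𝕜} {f : 𝕜 → β} (hf : ConvexOn 𝕜 s f)
    {r t x : 𝕜} (hr : r ∈ s) (ht : t ∈ s) (hx : x ∈ Ioo r t) (hrx : f r ≤ f x) (htx : f t ≤ f x)
    {y : 𝕜} (hy : y ∈ Icc r t) : f y = f x := by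
  have hys : y ∈ s := hf.1.ordConnected.out hr ht hy
  refine le_antisymm ?_ ?_
  · calc f y ≤ max (f r) (f t) := hf.le_on_segment hr ht (Icc_subset_segment hy)
      _ ≤ f x := max_le hrx htx
  · rcases le_total y x with hyx | hxy
    · exact hf.le_left_of_right_le'' hys ht hyx hx.2 htx
    · exact hf.le_right_of_left_le'' hr hys hx.1 hxy hrx

theorem convexOn_of_le_geom_mean {f : ℝ → ℝ} {s : Set ℝ} (hs : Convex ℝ s)
    (hf : ∀ x ∈ s, 0 ≤ f x)
    (hlc : ∀ r ∈ s, ∀ t ∈ s, ∀ θ : ℝ, θ ∈ Ioo (0 : ℝ) 1 →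
      f ((1 - θ) * r + θ * t) ≤ f r ^ (1 - θ) * f t ^ θ) :
    ConvexOn ℝ s f := by
  refine LinearOrder.convexOn_of_lt hs fun r hr t ht _ a b ha hb hab ↦ ?_
  obtain rfl : a = 1 - b := by linarith
  calc f ((1 - b) • r + b • t) ≤ f r ^ (1 - b) * f t ^ b := hlc r hr t ht b ⟨hb, by linarith⟩
    _ ≤ (1 - b) • f r + b • f t :=
      Real.geom_mean_le_arith_mean2_weighted ha.le hb.le (hf r hr) (hf t ht) hab

theorem strictConvexOn_of_le_geom_mean {f : ℝ → ℝ} {s : Set ℝ} (hs : Convex ℝ s)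
    (hf : ∀ x ∈ s, 0 ≤ f x)
    (hlc : ∀ r ∈ s, ∀ t ∈ s, ∀ θ : ℝ, θ ∈ Ioo (0 : ℝ) 1 →
      f ((1 - θ) * r + θ * t) ≤ f r ^ (1 - θ) * f t ^ θ)
    (hnc : ∀ a ∈ s, ∀ b ∈ s, a < b → ∃ x ∈ Icc a b, ∃ y ∈ Icc a b, f x ≠ f y) :
    StrictConvexOn ℝ s f := by
  have hconv := convexOn_of_le_geom_mean hs hf hlc
  refine LinearOrder.strictConvexOn_of_lt hs fun r hr t ht hrt a b ha hb hab ↦ ?_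
  obtain rfl : a = 1 - b := by linarith
  set x := (1 - b) • r + b • t
  by_cases hft : f r = f t
  · have hxr : f x ≤ f r :=
      (hconv.le_on_segment' hr ht ha.le hb.le hab).trans_eq (by rw [← hft, max_self])
    have hx : x ∈ Ioo r t := openSegment_eq_Ioo hrt ▸ ⟨1 - b, b, ha, hb, hab, rfl⟩
    suffices f x ≠ f r by
      rw [← hft, ← add_smul, hab, one_smul]
      exact lt_of_le_of_ne hxr this
    intro hx_eq
    have hconst : ∀ y ∈ Icc r t, f y = f x := fun y hy ↦
      hconv.eq_of_mem_Icc_of_le_of_le hr ht hx hx_eq.ge (hft ▸ hx_eq.ge) hy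
    obtain ⟨y, hy, y', hy', hyy'⟩ := hnc r hr t ht hrt
    exact hyy' ((hconst y hy).trans (hconst y' hy').symm)
  · calc f x ≤ f r ^ (1 - b) * f t ^ b := hlc r hr t ht b ⟨hb, by linarith⟩
      _ < (1 - b) • f r + b • f t :=
        (Real.geom_mean_lt_arith_mean2_weighted_iff_of_pos ha hb (hf r hr) (hf t ht) hab).2 hft

/-- If `f : ℝ → [0,∞)` is log-convex on an interval `I ⊆ ℝ` and `f` is not constant
on any nondegenerate subinterval of `I`, then `f` is strictly convex on `I`:
`f ((1-θ)r + θt) < (1-θ) f r + θ f t` for all `r ≠ t` in `I` and `θ ∈ (0,1)`. -/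
theorem logConvex_nonconstant_implies_strictConvex (f : ℝ → ℝ) (I : Set ℝ)
    (hI : Convex ℝ I)
    (hpos : ∀ s ∈ I, 0 < f s)
    (hlc : ∀ r ∈ I, ∀ t ∈ I, ∀ θ : ℝ, θ ∈ Set.Ioo (0 : ℝ) 1 →
      f ((1 - θ) * r + θ * t) ≤ f r ^ (1 - θ) * f t ^ θ)
    (hnc : ∀ a ∈ I, ∀ b ∈ I, a < b →
      ∃ s ∈ Set.Icc a b, ∃ s' ∈ Set.Icc a b, f s ≠ f s') :
    ∀ r ∈ I, ∀ t ∈ I, r ≠ t → ∀ θ : ℝ, θ ∈ Set.Ioo (0 : ℝ) 1 →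
      f ((1 - θ) * r + θ * t) < (1 - θ) * f r + θ * f t := by
  intro r hr t ht hrt θ hθ
  exact (strictConvexOn_of_le_geom_mean hI (fun s hs ↦ (hpos s hs).le) hlc hnc).2 hr ht hrt
    (sub_pos.2 hθ.2) hθ.1 (by ring)
end

section
/- Let H be a complex Hilbert space and A : H → H a bounded linear operator that is hyponormal, i.e. ‖A*x‖ ≤ ‖Ax‖ for every x ∈ H, where A* is the Hilbert-space adjoint of A. Then for every x ∈ H: 2(Re⟨Ax, x⟩)² ≤ Re⟨A²x, x⟩·‖x‖² + ‖Ax‖²·‖x‖². -/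
/-!
With `u = A x` and `v = A* x` one has `⟪A² x, x⟫ = ⟪u, v⟫` and `Re⟪v, x⟫ = Re⟪u, x⟫`, so
Cauchy–Schwarz for `u + v` against `x` gives
`4 (Re⟪A x, x⟫)² ≤ ‖u + v‖² ‖x‖² = (‖u‖² + 2 Re⟪u, v⟫ + ‖v‖²) ‖x‖²`,
and hyponormality `‖v‖ ≤ ‖u‖` bounds the right side by `2 (‖u‖² + Re⟪u, v⟫) ‖x‖²`.
-/

open scoped InnerProductSpace

namespace InnerProductSpace

variable {𝕜 E : Type*} [RCLike 𝕜] [NormedAddCommGroup E] [InnerProductSpace 𝕜 E]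

open RCLike in
theorem sq_re_inner_le_sq_norm_mul_sq_norm (x y : E) :
    re ⟪x, y⟫_𝕜 ^ 2 ≤ ‖x‖ ^ 2 * ‖y‖ ^ 2 := by
  rw [← mul_pow, ← sq_abs]
  gcongr
  exact (abs_re_le_norm _).trans (norm_inner_le_norm x y)

open RCLike in
theorem two_mul_sq_re_inner_le_of_re_inner_eq_of_norm_le {u v x : E}
    (hre : re ⟪v, x⟫_𝕜 = re ⟪u, x⟫_𝕜) (hnorm : ‖v‖ ≤ ‖u‖) :
    2 * re ⟪u, x⟫_𝕜 ^ 2 ≤ re ⟪u, v⟫_𝕜 * ‖x‖ ^ 2 + ‖u‖ ^ 2 * ‖x‖ ^ 2 := by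
  have hcs := sq_re_inner_le_sq_norm_mul_sq_norm (𝕜 := 𝕜) (u + v) x
  rw [inner_add_left, map_add, hre, norm_add_sq (𝕜 := 𝕜)] at hcs
  have hv : ‖v‖ ^ 2 * ‖x‖ ^ 2 ≤ ‖u‖ ^ 2 * ‖x‖ ^ 2 := by gcongr
  nlinarith

end InnerProductSpace

namespace ContinuousLinearMap

variable {𝕜 E : Type*} [RCLike 𝕜] [NormedAddCommGroup E] [InnerProductSpace 𝕜 E]
  [CompleteSpace E]

theorem re_inner_adjoint_apply_self (A : E →L[𝕜] E) (x : E) :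
    RCLike.re ⟪adjoint A x, x⟫_𝕜 = RCLike.re ⟪A x, x⟫_𝕜 := by
  rw [adjoint_inner_left, inner_re_symm]

end ContinuousLinearMap

open InnerProductSpace ContinuousLinearMap in
/-- Let `H` be a complex Hilbert space and `A : H →L[ℂ] H` a bounded linear operator
that is hyponormal, i.e. `‖A* x‖ ≤ ‖A x‖` for every `x`. Then for every `x ∈ H`:
`2 (Re⟪A x, x⟫)² ≤ Re⟪A² x, x⟫ ‖x‖² + ‖A x‖² ‖x‖²`. -/
theorem hyponormal_satisfies_logConvexity_criterion
    {H : Type*} [NormedAddCommGroup H] [InnerProductSpace ℂ H] [CompleteSpace H]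
    (A : H →L[ℂ] H)
    (hyp : ∀ x : H, ‖ContinuousLinearMap.adjoint A x‖ ≤ ‖A x‖) :
    ∀ x : H, 2 * (Complex.re ⟪A x, x⟫_ℂ) ^ 2 ≤
      Complex.re ⟪A (A x), x⟫_ℂ * ‖x‖ ^ 2 + ‖A x‖ ^ 2 * ‖x‖ ^ 2 := by
  intro x
  rw [← adjoint_inner_right A (A x) x]
  exact two_mul_sq_re_inner_le_of_re_inner_eq_of_norm_le
    (re_inner_adjoint_apply_self A x) (hyp x)
end

section
/- Let H be a complex Hilbert space and A : H → H a bounded linear operator. Then the following are equivalent: (I) for every x ∈ H, 2(Re⟨Ax, x⟩)² ≤ Re⟨A²x, x⟩·‖x‖² + ‖Ax‖²·‖x‖²; (II) for every u₀ ≠ 0 the height function h(t) = ‖exp(−t·A)u₀‖ is log-convex on [0,∞), i.e. for all 0 ≤ r < s < t, ‖exp(−s·A)u₀‖ ≤ ‖exp(−r·A)u₀‖^{(t−s)/(t−r)} · ‖exp(−t·A)u₀‖^{(s−r)/(t−r)}. -/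
/-!
Write `u t = exp (-t A) u₀`, so that `u' = -A u`. Then `(log ‖u‖)' = -Re⟪A u, u⟫ / ‖u‖²` and
`(log ‖u‖)'' = Δ(u) / ‖u‖⁴`, where `Δ(x) = Re⟪A² x, x⟫ ‖x‖² + ‖A x‖² ‖x‖² - 2 (Re⟪A x, x⟫)²`
and criterion (I) reads `Δ ≥ 0`. Log-convexity of `‖u‖` is convexity of `log ‖u‖`. If `Δ ≥ 0`
everywhere, `(log ‖u‖)''` is nonnegative. Conversely, convexity on `[0, ∞)` makes `(log ‖u‖)'`
monotone there, so its right derivative at `0`, namely `Δ(u₀) / ‖u₀‖⁴`, is nonnegative.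
-/

open scoped InnerProductSpace
open NormedSpace Set Filter

lemma convexOn_iff_le_secant {S : Set ℝ} {f : ℝ → ℝ} :
    ConvexOn ℝ S f ↔ Convex ℝ S ∧ ∀ ⦃r s t⦄, r ∈ S → t ∈ S → r < s → s < t →
      f s ≤ (t - s) / (t - r) * f r + (s - r) / (t - r) * f t := by
  have slope_iff : ∀ {r s t : ℝ}, r < s → s < t →
      ((f s - f r) / (s - r) ≤ (f t - f s) / (t - s) ↔
        f s ≤ (t - s) / (t - r) * f r + (s - r) / (t - r) * f t) := by
    intro r s t hrs hst
    rw [div_le_div_iff₀ (by linarith) (by linarith), div_mul_eq_mul_div, div_mul_eq_mul_div,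
      ← add_div, le_div_iff₀ (by linarith)]
    constructor <;> intro h <;> linarith
  rw [convexOn_iff_slope_mono_adjacent]
  exact and_congr_right fun _ => forall₃_congr fun r s t =>
    imp_congr_right fun _ => imp_congr_right fun _ => forall₂_congr fun hrs hst => slope_iff hrs hst

lemma convexOn_log_iff {S : Set ℝ} {φ : ℝ → ℝ} (hφ : ∀ x ∈ S, 0 < φ x) :
    ConvexOn ℝ S (fun x => Real.log (φ x)) ↔ Convex ℝ S ∧ ∀ ⦃r s t⦄, r ∈ S → t ∈ S → r < s →
      s < t → φ s ≤ φ r ^ ((t - s) / (t - r)) * φ t ^ ((s - r) / (t - r)) := by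
  rw [convexOn_iff_le_secant]
  refine and_congr_right fun hS => forall₃_congr fun r s t =>
    forall₄_congr fun hr ht hrs hst => ?_
  have hs : s ∈ S := hS.ordConnected.out hr ht ⟨hrs.le, hst.le⟩
  have hr' := hφ r hr
  have ht' := hφ t ht
  rw [← Real.log_rpow hr', ← Real.log_rpow ht', ← Real.log_mul (by positivity) (by positivity),
    Real.log_le_log_iff (hφ s hs) (by positivity)]

section Exp

variable {E : Type*} [NormedAddCommGroup E] [NormedSpace ℂ E] [CompleteSpace E]

lemma exp_apply_ne_zero (B : E →L[ℂ] E) {x : E} (hx : x ≠ 0) : exp B x ≠ 0 := by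
  -- `isUnit_exp` is stated for `ℚ`-normed algebras.
  let : NormedAlgebra ℚ (E →L[ℂ] E) := NormedAlgebra.restrictScalars ℚ ℂ _
  obtain ⟨v, hv⟩ := isUnit_exp B
  rw [← hv]
  exact (ContinuousLinearEquiv.ofUnit v).map_ne_zero_iff.2 hx

lemma hasDerivAt_exp_neg_smul_apply (A : E →L[ℂ] E) (x : E) (t : ℝ) :
    HasDerivAt (fun s : ℝ => exp (-(s : ℂ) • A) x) (-A (exp (-(t : ℂ) • A) x)) t := by
  have h : HasDerivAt (fun s : ℝ => exp (s • -A)) (-A * exp (t • -A)) t :=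
    hasDerivAt_exp_smul_const' (-A) t
  have hsmul : ∀ s : ℝ, -(s : ℂ) • A = s • -A := fun s => by
    rw [neg_smul, smul_neg, ← Complex.coe_smul]
  simp only [hsmul]
  exact ((ContinuousLinearMap.apply ℂ E x).restrictScalars ℝ).hasFDerivAt.comp_hasDerivAt t h

end Exp

section Flow

variable {H : Type*} [NormedAddCommGroup H] [InnerProductSpace ℂ H] (A : H →L[ℂ] H)

/-- `‖x‖⁴` times the second derivative at `t = 0` of `t ↦ log ‖exp (-t A) x‖`. -/
noncomputable def logConvexityGap (x : H) : ℝ :=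
  Complex.re ⟪A (A x), x⟫_ℂ * ‖x‖ ^ 2 + ‖A x‖ ^ 2 * ‖x‖ ^ 2 - 2 * A.reApplyInnerSelf x ^ 2

variable {A} {u : ℝ → H} {t : ℝ}

lemma hasDerivAt_norm_sq_flow (hu : HasDerivAt u (-A (u t)) t) :
    HasDerivAt (fun s => ‖u s‖ ^ 2) (-2 * A.reApplyInnerSelf (u t)) t := by
  have norm_sq : (fun s => ‖u s‖ ^ 2) = fun s => Complex.re ⟪u s, u s⟫_ℂ :=
    funext fun s => (inner_self_eq_norm_sq (𝕜 := ℂ) (u s)).symm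
  rw [norm_sq]
  refine (Complex.reCLM.hasFDerivAt.comp_hasDerivAt t (hu.inner ℂ hu)).congr_deriv ?_
  have symm : Complex.re ⟪u t, A (u t)⟫_ℂ = A.reApplyInnerSelf (u t) :=
    inner_re_symm (𝕜 := ℂ) _ _
  simp only [Complex.reCLM_apply, inner_neg_left, inner_neg_right, Complex.add_re,
    Complex.neg_re, symm]
  rw [A.reApplyInnerSelf_apply, RCLike.re_to_complex]
  ring

lemma hasDerivAt_reApplyInnerSelf_flow (hu : HasDerivAt u (-A (u t)) t) :
    HasDerivAt (fun s => A.reApplyInnerSelf (u s))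
      (-(Complex.re ⟪A (A (u t)), u t⟫_ℂ + ‖A (u t)‖ ^ 2)) t := by
  have hAu : HasDerivAt (fun s => A (u s)) (A (-A (u t))) t :=
    (A.restrictScalars ℝ).hasFDerivAt.comp_hasDerivAt t hu
  refine (Complex.reCLM.hasFDerivAt.comp_hasDerivAt t (hAu.inner ℂ hu)).congr_deriv ?_
  have norm_sq : Complex.re ⟪A (u t), A (u t)⟫_ℂ = ‖A (u t)‖ ^ 2 :=
    inner_self_eq_norm_sq (𝕜 := ℂ) _
  simp only [Complex.reCLM_apply, inner_neg_left, inner_neg_right, map_neg, Complex.add_re,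
    Complex.neg_re, norm_sq]
  ring

lemma hasDerivAt_log_norm_flow (hu : HasDerivAt u (-A (u t)) t) (h0 : u t ≠ 0) :
    HasDerivAt (fun s => Real.log ‖u s‖) (-A.rayleighQuotient (u t)) t := by
  have h := ((hasDerivAt_norm_sq_flow hu).log (by positivity)).div_const 2
  have log_norm : (fun s => Real.log ‖u s‖) = fun s => Real.log (‖u s‖ ^ 2) / 2 := by
    funext s
    rw [Real.log_pow]
    ring
  rw [log_norm]
  refine h.congr_deriv ?_
  ring

lemma hasDerivAt_rayleighQuotient_flow (hu : HasDerivAt u (-A (u t)) t) (h0 : u t ≠ 0) :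
    HasDerivAt (fun s => A.rayleighQuotient (u s)) (-(logConvexityGap A (u t) / ‖u t‖ ^ 4)) t := by
  refine ((hasDerivAt_reApplyInnerSelf_flow hu).div (hasDerivAt_norm_sq_flow hu)
    (by positivity)).congr_deriv ?_
  simp only [logConvexityGap]
  ring

end Flow

section Semigroup

variable {H : Type*} [NormedAddCommGroup H] [InnerProductSpace ℂ H] [CompleteSpace H]
  {A : H →L[ℂ] H} {x : H}

lemma convexOn_log_norm_exp_neg_smul_apply (h : ∀ y, 0 ≤ logConvexityGap A y) (hx : x ≠ 0) :
    ConvexOn ℝ univ (fun t : ℝ => Real.log ‖exp (-(t : ℂ) • A) x‖) := by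
  have hu := hasDerivAt_exp_neg_smul_apply A x
  have h0 := fun t : ℝ => exp_apply_ne_zero (-(t : ℂ) • A) hx
  refine convexOn_of_hasDerivWithinAt2_nonneg convex_univ
    (fun t _ => (hasDerivAt_log_norm_flow (hu t) (h0 t)).continuousAt.continuousWithinAt)
    (fun t _ => (hasDerivAt_log_norm_flow (hu t) (h0 t)).hasDerivWithinAt)
    (fun t _ => (hasDerivAt_rayleighQuotient_flow (hu t) (h0 t)).neg.hasDerivWithinAt)
    (fun t _ => ?_)
  rw [neg_neg]
  exact div_nonneg (h _) (by positivity)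

lemma logConvexityGap_nonneg_of_convexOn (hx : x ≠ 0)
    (h : ConvexOn ℝ (Ici 0) (fun t : ℝ => Real.log ‖exp (-(t : ℂ) • A) x‖)) :
    0 ≤ logConvexityGap A x := by
  have hu := hasDerivAt_exp_neg_smul_apply A x
  have h0 := fun t : ℝ => exp_apply_ne_zero (-(t : ℂ) • A) hx
  have mono : MonotoneOn (fun t : ℝ => -A.rayleighQuotient (exp (-(t : ℂ) • A) x)) (Ici 0) := by
    have := h.monotoneOn_deriv fun t _ => (hasDerivAt_log_norm_flow (hu t) (h0 t)).differentiableAt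
    rwa [funext fun t => (hasDerivAt_log_norm_flow (hu t) (h0 t)).deriv] at this
  have acc : AccPt (0 : ℝ) (𝓟 (Ici 0)) := by
    rw [accPt_principal_iff_nhdsWithin, Ici_sdiff_left]
    infer_instance
  have := (hasDerivAt_rayleighQuotient_flow (hu 0) (h0 0)).neg.hasDerivWithinAt
    |>.nonneg_of_monotoneOn acc mono
  simp only [neg_neg, Complex.ofReal_zero, neg_zero, zero_smul, exp_zero,
    one_apply_eq_self] at this
  simpa using (le_div_iff₀ (by positivity)).1 this

end Semigroup

/-- Let `H` be a complex Hilbert space and `A : H →L[ℂ] H` a bounded linear operator.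
The following are equivalent: (I) `2 (Re⟪A x, x⟫)² ≤ Re⟪A² x, x⟫ ‖x‖² + ‖A x‖² ‖x‖²`
for every `x ∈ H`; (II) for every `u₀ ≠ 0` the height function
`h t = ‖exp (-t • A) u₀‖` is log-convex on `[0,∞)`: for all `0 ≤ r < s < t`,
`h s ≤ h r ^ ((t-s)/(t-r)) * h t ^ ((s-r)/(t-r))`. -/
theorem logConvex_height_iff_criterion
    {H : Type*} [NormedAddCommGroup H] [InnerProductSpace ℂ H] [CompleteSpace H]
    (A : H →L[ℂ] H) :
    (∀ x : H, 2 * (Complex.re ⟪A x, x⟫_ℂ) ^ 2 ≤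
        Complex.re ⟪A (A x), x⟫_ℂ * ‖x‖ ^ 2 + ‖A x‖ ^ 2 * ‖x‖ ^ 2) ↔
      (∀ u₀ : H, u₀ ≠ 0 → ∀ r s t : ℝ, 0 ≤ r → r < s → s < t →
        ‖NormedSpace.exp (-(s : ℂ) • A) u₀‖ ≤
          ‖NormedSpace.exp (-(r : ℂ) • A) u₀‖ ^ ((t - s) / (t - r)) *
            ‖NormedSpace.exp (-(t : ℂ) • A) u₀‖ ^ ((s - r) / (t - r))) := by
  have criterion_iff (x : H) : 2 * (Complex.re ⟪A x, x⟫_ℂ) ^ 2 ≤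
      Complex.re ⟪A (A x), x⟫_ℂ * ‖x‖ ^ 2 + ‖A x‖ ^ 2 * ‖x‖ ^ 2 ↔ 0 ≤ logConvexityGap A x :=
    sub_nonneg.symm
  have height_pos {u₀ : H} (hu₀ : u₀ ≠ 0) (t : ℝ) : 0 < ‖exp (-(t : ℂ) • A) u₀‖ :=
    norm_pos_iff.2 (exp_apply_ne_zero _ hu₀)
  simp only [criterion_iff]
  constructor
  · intro h u₀ hu₀ r s t _ hrs hst
    exact ((convexOn_log_iff fun t _ => height_pos hu₀ t).1
      (convexOn_log_norm_exp_neg_smul_apply h hu₀)).2 trivial trivial hrs hst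
  · intro h x
    rcases eq_or_ne x 0 with rfl | hx
    · simp [logConvexityGap, ContinuousLinearMap.reApplyInnerSelf_apply]
    · exact logConvexityGap_nonneg_of_convexOn hx ((convexOn_log_iff fun t _ => height_pos hx t).2
        ⟨convex_Ici 0, fun r s t hr _ hrs hst => h x hx r s t hr hrs hst⟩)
end

section
/- Let H be a complex Hilbert space (or a complex Banach space), A : H → H a bounded linear operator, and η ∈ ℝ with η < Re λ for every λ in the spectrum of A. Then there exists a constant M ≥ 1 such that ‖exp(−t·A)‖ ≤ M·e^{−tη} for all t ≥ 0. -/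
/-!
Since `exp (-A)` has spectrum contained in `exp (-σ(A))`, a compact set inside the open disc of
radius `e^{-η}`, Gelfand's formula gives `‖exp (-A) ^ n‖ ≤ C e^{-nη}` for all `n`. Writing
`t = n + s` with `s ∈ [0, 1]`, `exp (-tA) = exp (-A) ^ n * exp (-sA)`, and the second factor is
bounded by continuity on the compact interval `[0, 1]`.
-/

open NormedSpace Filter

theorem Subalgebra.isUnit_centralizer_iff {R A : Type*} [CommSemiring R] [Semiring A]
    [Algebra R A] {s : Set A} (x : Subalgebra.centralizer R s) : IsUnit x ↔ IsUnit (x : A) := by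
  refine ⟨fun hx => hx.map (Subalgebra.centralizer R s).val, fun ⟨u, hu⟩ => ?_⟩
  have hinv : (↑u⁻¹ : A) ∈ Subalgebra.centralizer R s := fun g hg =>
    (hu ▸ x.2 g hg : Commute g u).units_inv_right.eq
  exact ⟨⟨x, ⟨_, hinv⟩, Subtype.ext (by simp [← hu]), Subtype.ext (by simp [← hu])⟩, rfl⟩

theorem Subalgebra.spectrum_centralizer_eq {R A : Type*} [CommRing R] [Ring A] [Algebra R A]
    {s : Set A} (x : Subalgebra.centralizer R s) : spectrum R x = spectrum R (x : A) := by
  ext r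
  rw [spectrum.mem_iff, spectrum.mem_iff, Subalgebra.isUnit_centralizer_iff]
  rfl

theorem spectrum_exp_subset_of_commRing {A : Type*} [NormedCommRing A] [NormedAlgebra ℂ A]
    [NormedAlgebra ℚ A] [CompleteSpace A] (a : A) :
    spectrum ℂ (exp a) ⊆ Complex.exp '' spectrum ℂ a := by
  intro μ hμ
  obtain ⟨φ, rfl⟩ := WeakDual.CharacterSpace.mem_spectrum_iff_exists.mp hμ
  exact ⟨φ a, AlgHom.apply_mem_spectrum φ a,
    by rw [map_exp φ (map_continuous φ), Complex.exp_eq_exp_ℂ]⟩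

section ComplexBanachAlgebra

variable {A : Type*} [NormedRing A] [NormedAlgebra ℂ A] [CompleteSpace A]

/-- The bicommutant of `a` is a closed commutative subalgebra in which `a` has the same spectrum
as in `A`, so Gelfand theory applies there. -/
theorem spectrum_exp_subset [NormedAlgebra ℚ A] (a : A) :
    spectrum ℂ (exp a) ⊆ Complex.exp '' spectrum ℂ a := by
  let B := Subalgebra.centralizer ℂ (Subalgebra.centralizer ℂ {a} : Set A)
  let _ : NormedCommRing B :=
    { (inferInstance : NormedRing B) with
      mul_comm := fun x y => Subtype.ext <|
        Set.centralizer_centralizer_comm_of_comm (S := {a}) (by simp) x x.2 y y.2 }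
  let _ : NormedAlgebra ℚ B := NormedAlgebra.restrictScalars ℚ ℂ B
  have : CompleteSpace B := (Set.isClosed_centralizer _).completeSpace_coe
  let b : B := ⟨a, Set.subset_centralizer_centralizer rfl⟩
  have hexp : ((exp b : B) : A) = exp a := map_exp B.val continuous_subtype_val b
  rw [← hexp, ← Subalgebra.spectrum_centralizer_eq, ← Subalgebra.spectrum_centralizer_eq b]
  exact spectrum_exp_subset_of_commRing b

theorem spectralRadius_exp_neg_lt [NormedAlgebra ℚ A] {a : A} {η : ℝ}
    (hη : ∀ z ∈ spectrum ℂ a, η < z.re) :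
    spectralRadius ℂ (exp (-a)) < ENNReal.ofReal (Real.exp (-η)) := by
  rcases (spectrum ℂ (exp (-a))).eq_empty_or_nonempty with hempty | hne
  · simp [spectralRadius, hempty, Real.exp_pos]
  refine spectrum.spectralRadius_lt_of_forall_lt_of_nonempty hne fun μ hμ => ?_
  obtain ⟨z, hz, rfl⟩ := spectrum_exp_subset (-a) hμ
  rw [← spectrum.neg_eq, Set.mem_neg] at hz
  have hre : η < -z.re := by simpa using hη _ hz
  rw [← NNReal.coe_lt_coe, coe_nnnorm, Real.coe_toNNReal _ (Real.exp_pos _).le, Complex.norm_exp,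
    Real.exp_lt_exp]
  linarith

theorem exists_norm_pow_le_mul_pow_of_spectralRadius_lt {a : A} {r : ℝ}
    (h : spectralRadius ℂ a < ENNReal.ofReal r) : ∃ C, ∀ n : ℕ, ‖a ^ n‖ ≤ C * r ^ n := by
  have hr : 0 < r := ENNReal.ofReal_pos.mp (h.trans_le' bot_le)
  have hev : ∀ᶠ n : ℕ in atTop, ‖a ^ n‖ / r ^ n ≤ 1 := by
    filter_upwards [(spectrum.pow_norm_pow_one_div_tendsto_nhds_spectralRadius a).eventually_lt_const
      h, eventually_gt_atTop 0] with n hn hn0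
    rw [ENNReal.ofReal_lt_ofReal_iff hr, one_div,
      Real.rpow_inv_lt_iff_of_pos (norm_nonneg _) hr.le (by positivity)] at hn
    exact (div_le_one (by positivity)).mpr (mod_cast hn.le)
  obtain ⟨C, hC⟩ := (isBoundedUnder_of_eventually_le hev).bddAbove_range
  exact ⟨C, fun n => (div_le_iff₀ (by positivity)).mp (hC ⟨n, rfl⟩)⟩

theorem exp_natCast_add_smul [NormedAlgebra ℚ A] (x : A) (n : ℕ) (s : ℂ) :
    exp (((n : ℂ) + s) • x) = exp x ^ n * exp (s • x) := by
  rw [add_smul, exp_add_of_commute (((Commute.refl x).smul_left _).smul_right _),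
    Nat.cast_smul_eq_nsmul, exp_nsmul]

end ComplexBanachAlgebra

/-- Let `H` be a complex Banach space, `A : H →L[ℂ] H` a bounded linear operator and
`η ∈ ℝ` with `η < Re z` for every `z` in the spectrum of `A`. Then there is a
constant `M ≥ 1` with `‖exp (-t • A)‖ ≤ M * e^(-t η)` for all `t ≥ 0`. -/
theorem semigroup_decay_estimate
    {H : Type*} [NormedAddCommGroup H] [NormedSpace ℂ H] [CompleteSpace H]
    (A : H →L[ℂ] H) (η : ℝ)
    (hη : ∀ z ∈ spectrum ℂ A, η < z.re) :
    ∃ M : ℝ, 1 ≤ M ∧ ∀ t : ℝ, 0 ≤ t →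
      ‖NormedSpace.exp (-(t : ℂ) • A)‖ ≤ M * Real.exp (-t * η) := by
  -- `exp` itself does not depend on this instance, only the library lemmas about it ask for one.
  let _ : NormedAlgebra ℚ (H →L[ℂ] H) := NormedAlgebra.restrictScalars ℚ ℂ _
  obtain ⟨C, hC⟩ := exists_norm_pow_le_mul_pow_of_spectralRadius_lt (spectralRadius_exp_neg_lt hη)
  obtain ⟨K, hK⟩ := (isCompact_Icc (a := (0 : ℝ)) (b := 1)).exists_bound_of_continuousOn
    (f := fun s : ℝ => exp ((s : ℂ) • -A)) (by fun_prop)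
  have hC0 : 0 ≤ C := by simpa using (norm_nonneg _).trans (hC 0)
  have hK0 : 0 ≤ K := (norm_nonneg _).trans (hK 0 (by simp))
  refine ⟨max 1 (C * K * Real.exp |η|), le_max_left _ _, fun t ht => ?_⟩
  set n := ⌊t⌋₊
  have hs : t - n ∈ Set.Icc (0 : ℝ) 1 :=
    ⟨sub_nonneg.mpr (Nat.floor_le ht), by linarith [Nat.lt_floor_add_one t]⟩
  have hsplit : -(t : ℂ) • A = ((n : ℂ) + ((t - n : ℝ) : ℂ)) • -A := by
    rw [smul_neg, ← neg_smul]; push_cast; ring_nf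
  have hdecay : Real.exp (-η) ^ n ≤ Real.exp |η| * Real.exp (-t * η) := by
    rw [← Real.exp_nat_mul, ← Real.exp_add, Real.exp_le_exp]
    nlinarith [hs.1, hs.2, le_abs_self η, neg_abs_le η]
  calc ‖exp (-(t : ℂ) • A)‖ = ‖exp (-A) ^ n * exp (((t - n : ℝ) : ℂ) • -A)‖ := by
        rw [hsplit, exp_natCast_add_smul (-A)]
    _ ≤ C * Real.exp (-η) ^ n * K :=
        (norm_mul_le _ _).trans (mul_le_mul (hC n) (hK _ hs) (norm_nonneg _) (by positivity))
    _ ≤ C * K * Real.exp |η| * Real.exp (-t * η) := by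
        rw [mul_right_comm, mul_assoc _ (Real.exp |η|)]; gcongr
    _ ≤ max 1 (C * K * Real.exp |η|) * Real.exp (-t * η) := by
        gcongr; exact le_max_right _ _
end

section
/- Let α < β be real numbers and u : [α,β] → ℂ continuously differentiable with u(α) = 0. Then Re ∫_α^β ( |u'(x)|² + u'(x)·conj(u(x)) ) dx = ∫_α^β |u'(x)|² dx + (1/2)|u(β)|², and moreover Re ∫_α^β ( |u'(x)|² + u'(x)·conj(u(x)) ) dx ≥ C₀ · ∫_α^β ( |u(x)|² + |u'(x)|² ) dx where C₀ = min(1/2, (β−α)^{−2}). -/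
/-!
Since `(‖u‖²)' = 2 Re (u' · conj u)`, the advection term integrates to `(‖u β‖² - ‖u α‖²) / 2`,
which gives the identity. For the lower bound, `u x = ∫_α^x u'` and Cauchy–Schwarz give
`‖u x‖² ≤ (x - α) ∫_α^β ‖u'‖²`; integrating in `x` yields the Poincaré inequality
`∫ ‖u‖² ≤ (β - α)² / 2 · ∫ ‖u'‖²`. Its factor `1 / 2` is what makes `C₀ = min (1/2) (β - α)⁻²`
work: both `C₀ ∫ ‖u‖²` and `C₀ ∫ ‖u'‖²` are then at most `(1/2) ∫ ‖u'‖²`.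
-/

open MeasureTheory Set

section Interval

variable {E : Type*} [NormedAddCommGroup E] [NormedSpace ℝ E] [CompleteSpace E]
  {a b : ℝ} {u u' : ℝ → E}

theorem integral_eq_sub_of_hasDerivWithinAt_Icc (hab : a ≤ b)
    (hu : ∀ x ∈ Icc a b, HasDerivWithinAt u (u' x) (Icc a b) x)
    (hu' : IntervalIntegrable u' volume a b) : ∫ x in a..b, u' x = u b - u a :=
  intervalIntegral.integral_eq_sub_of_hasDeriv_right_of_le hab
    (fun x hx => (hu x hx).continuousWithinAt)
    (fun x hx => ((hu x (Ioo_subset_Icc_self hx)).hasDerivAt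
      (Icc_mem_nhds hx.1 hx.2)).hasDerivWithinAt) hu'

theorem sq_integral_le_mul_integral_sq {f : ℝ → ℝ} (hab : a ≤ b)
    (hf : IntervalIntegrable f volume a b)
    (hf2 : IntervalIntegrable (fun x => f x ^ 2) volume a b) :
    (∫ x in a..b, f x) ^ 2 ≤ (b - a) * ∫ x in a..b, f x ^ 2 := by
  set I := ∫ x in a..b, f x
  set J := ∫ x in a..b, f x ^ 2
  have hexpand : ∫ x in a..b, ((b - a) * f x - I) ^ 2 = (b - a) * ((b - a) * J - I ^ 2) := by
    have : (fun x => ((b - a) * f x - I) ^ 2)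
        = fun x => ((b - a) ^ 2 * f x ^ 2 - 2 * (b - a) * I * f x) + I ^ 2 := by
      ext x; ring
    rw [this, intervalIntegral.integral_add ((hf2.const_mul _).sub (hf.const_mul _))
        intervalIntegrable_const,
      intervalIntegral.integral_sub (hf2.const_mul _) (hf.const_mul _),
      intervalIntegral.integral_const_mul, intervalIntegral.integral_const_mul,
      intervalIntegral.integral_const, smul_eq_mul]
    ring
  have hnonneg : 0 ≤ (b - a) * ((b - a) * J - I ^ 2) :=
    hexpand ▸ intervalIntegral.integral_nonneg hab fun _ _ => sq_nonneg _
  rcases hab.eq_or_lt with rfl | hlt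
  · simp [I]
  · nlinarith [(mul_nonneg_iff_of_pos_left (sub_pos.2 hlt)).1 hnonneg]

theorem norm_sq_le_mul_integral_norm_deriv_sq (hab : a ≤ b)
    (hu : ∀ x ∈ Icc a b, HasDerivWithinAt u (u' x) (Icc a b) x)
    (hu' : ContinuousOn u' (Icc a b)) (ha : u a = 0) :
    ‖u b‖ ^ 2 ≤ (b - a) * ∫ x in a..b, ‖u' x‖ ^ 2 := by
  have hub : u b = ∫ x in a..b, u' x := by
    rw [integral_eq_sub_of_hasDerivWithinAt_Icc hab hu (hu'.intervalIntegrable_of_Icc hab), ha,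
      sub_zero]
  calc ‖u b‖ ^ 2 ≤ (∫ x in a..b, ‖u' x‖) ^ 2 := by
        rw [hub]; gcongr; exact intervalIntegral.norm_integral_le_integral_norm hab
    _ ≤ (b - a) * ∫ x in a..b, ‖u' x‖ ^ 2 :=
        sq_integral_le_mul_integral_sq hab (hu'.norm.intervalIntegrable_of_Icc hab)
          ((hu'.norm.pow 2).intervalIntegrable_of_Icc hab)

theorem integral_norm_sq_le_of_eq_zero_left (hab : a ≤ b)
    (hu : ∀ x ∈ Icc a b, HasDerivWithinAt u (u' x) (Icc a b) x)
    (hu' : ContinuousOn u' (Icc a b)) (ha : u a = 0) :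
    ∫ x in a..b, ‖u x‖ ^ 2 ≤ (b - a) ^ 2 / 2 * ∫ x in a..b, ‖u' x‖ ^ 2 := by
  have hucont : ContinuousOn u (Icc a b) := fun x hx => (hu x hx).continuousWithinAt
  have hpointwise : ∀ x ∈ Icc a b, ‖u x‖ ^ 2 ≤ (x - a) * ∫ t in a..b, ‖u' t‖ ^ 2 := by
    intro x hx
    have hsub : Icc a x ⊆ Icc a b := Icc_subset_Icc_right hx.2
    calc ‖u x‖ ^ 2 ≤ (x - a) * ∫ t in a..x, ‖u' t‖ ^ 2 :=
          norm_sq_le_mul_integral_norm_deriv_sq hx.1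
            (fun t ht => (hu t (hsub ht)).mono hsub) (hu'.mono hsub) ha
      _ ≤ (x - a) * ∫ t in a..b, ‖u' t‖ ^ 2 := by
          gcongr
          · exact sub_nonneg.2 hx.1
          · exact intervalIntegral.integral_mono_interval le_rfl hx.1 hx.2
              (Filter.Eventually.of_forall fun t => sq_nonneg _)
              ((hu'.norm.pow 2).intervalIntegrable_of_Icc hab)
  calc ∫ x in a..b, ‖u x‖ ^ 2 ≤ ∫ x in a..b, (x - a) * ∫ t in a..b, ‖u' t‖ ^ 2 :=
        intervalIntegral.integral_mono_on hab
          ((hucont.norm.pow 2).intervalIntegrable_of_Icc hab)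
          ((by fun_prop : Continuous fun x => (x - a) * _).intervalIntegrable _ _) hpointwise
    _ = (b - a) ^ 2 / 2 * ∫ x in a..b, ‖u' x‖ ^ 2 := by
        rw [intervalIntegral.integral_mul_const, intervalIntegral.integral_comp_sub_right
          (fun x => x), integral_id]
        ring

end Interval

theorem integral_inner_deriv_eq {F : Type*} [NormedAddCommGroup F] [InnerProductSpace ℝ F]
    [CompleteSpace F] {a b : ℝ} {u u' : ℝ → F} (hab : a ≤ b)
    (hu : ∀ x ∈ Icc a b, HasDerivWithinAt u (u' x) (Icc a b) x)
    (hu' : ContinuousOn u' (Icc a b)) :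
    ∫ x in a..b, inner ℝ (u x) (u' x) = (‖u b‖ ^ 2 - ‖u a‖ ^ 2) / 2 := by
  have hucont : ContinuousOn u (Icc a b) := fun x hx => (hu x hx).continuousWithinAt
  have h := integral_eq_sub_of_hasDerivWithinAt_Icc hab (fun x hx => (hu x hx).norm_sq)
    ((continuousOn_const.mul (hucont.inner hu')).intervalIntegrable_of_Icc hab)
  rw [intervalIntegral.integral_const_mul] at h
  linarith

open ComplexConjugate in
theorem re_integral_norm_deriv_sq_add_deriv_mul_conj {a b : ℝ} {u u' : ℝ → ℂ} (hab : a ≤ b)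
    (hu : ∀ x ∈ Icc a b, HasDerivWithinAt u (u' x) (Icc a b) x)
    (hu' : ContinuousOn u' (Icc a b)) :
    (∫ x in a..b, ((‖u' x‖ ^ 2 : ℝ) : ℂ) + u' x * conj (u x)).re =
      (∫ x in a..b, ‖u' x‖ ^ 2) + (‖u b‖ ^ 2 - ‖u a‖ ^ 2) / 2 := by
  have hucont : ContinuousOn u (Icc a b) := fun x hx => (hu x hx).continuousWithinAt
  have hconj : ContinuousOn (fun x => u' x * conj (u x)) (Icc a b) :=
    hu'.mul (Complex.continuous_conj.comp_continuousOn hucont)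
  have hre := intervalIntegral.intervalIntegral_re (μ := volume)
    (f := fun x => ((‖u' x‖ ^ 2 : ℝ) : ℂ) + u' x * conj (u x)) <|
    ContinuousOn.intervalIntegrable_of_Icc hab <|
      (Complex.continuous_ofReal.comp_continuousOn (hu'.norm.pow 2)).add hconj
  simp only [RCLike.re_to_complex, Complex.add_re, Complex.ofReal_re] at hre
  rw [← hre, intervalIntegral.integral_add (f := fun x => ‖u' x‖ ^ 2)
    (g := fun x => (u' x * conj (u x)).re) ((hu'.norm.pow 2).intervalIntegrable_of_Icc hab)
    ((Complex.continuous_re.comp_continuousOn hconj).intervalIntegrable_of_Icc hab),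
    ← integral_inner_deriv_eq hab hu hu']
  simp only [Complex.inner]

theorem min_half_inv_sq_mul_add_le {L P D : ℝ} (hL : 0 < L) (hD : 0 ≤ D)
    (hP : P ≤ L ^ 2 / 2 * D) : min (1 / 2) (L ^ 2)⁻¹ * (P + D) ≤ D := by
  set m := min (1 / 2 : ℝ) (L ^ 2)⁻¹
  have hm0 : 0 ≤ m := le_min (by norm_num) (by positivity)
  have hmL : m * L ^ 2 ≤ 1 :=
    (le_mul_inv_iff₀ (by positivity)).1 ((min_le_right _ _).trans_eq (one_mul _).symm)
  nlinarith [min_le_left (1 / 2 : ℝ) (L ^ 2)⁻¹, mul_le_mul_of_nonneg_left hP hm0]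

/-- Let `α < β` and `u : [α,β] → ℂ` be continuously differentiable with `u α = 0`.
Then `Re ∫_α^β (‖u'‖² + u' * conj u) = ∫_α^β ‖u'‖² + (1/2) ‖u β‖²`, and moreover
`Re ∫_α^β (‖u'‖² + u' * conj u) ≥ C₀ ∫_α^β (‖u‖² + ‖u'‖²)` with
`C₀ = min (1/2) ((β - α)⁻²)` (V-ellipticity of the advection–diffusion form). -/
theorem advection_diffusion_form_ellipticity (α β : ℝ) (hαβ : α < β)
    (u u' : ℝ → ℂ)
    (hu' : ∀ x ∈ Set.Icc α β, HasDerivWithinAt u (u' x) (Set.Icc α β) x)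
    (hcont : ContinuousOn u' (Set.Icc α β))
    (hα : u α = 0) :
    (∫ x in α..β, ((‖u' x‖ ^ 2 : ℝ) : ℂ) + u' x * (starRingEnd ℂ) (u x)).re =
        (∫ x in α..β, ‖u' x‖ ^ 2) + (1 / 2) * ‖u β‖ ^ 2 ∧
      min (1 / 2) ((β - α) ^ (2 : ℕ))⁻¹ *
          ∫ x in α..β, (‖u x‖ ^ 2 + ‖u' x‖ ^ 2) ≤
        (∫ x in α..β, ((‖u' x‖ ^ 2 : ℝ) : ℂ) + u' x * (starRingEnd ℂ) (u x)).re := by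
  have hle := hαβ.le
  have hucont : ContinuousOn u (Icc α β) := fun x hx => (hu' x hx).continuousWithinAt
  have hform := re_integral_norm_deriv_sq_add_deriv_mul_conj hle hu' hcont
  rw [hα, norm_zero, zero_pow two_ne_zero, sub_zero, div_eq_inv_mul, ← one_div] at hform
  refine ⟨hform, ?_⟩
  have hD : 0 ≤ ∫ x in α..β, ‖u' x‖ ^ 2 :=
    intervalIntegral.integral_nonneg hle fun _ _ => sq_nonneg _
  have hP := integral_norm_sq_le_of_eq_zero_left hle hu' hcont hα
  rw [hform, intervalIntegral.integral_add (f := fun x => ‖u x‖ ^ 2) (g := fun x => ‖u' x‖ ^ 2)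
    ((hucont.norm.pow 2).intervalIntegrable_of_Icc hle)
    ((hcont.norm.pow 2).intervalIntegrable_of_Icc hle)]
  exact (min_half_inv_sq_mul_add_le (sub_pos.2 hαβ) hD hP).trans
    (le_add_of_nonneg_right (by positivity))
end
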